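/- If a graph biembeddable in S_g (g ≥ 1) has n vertices and at most 6n - 12 + 12g edges for every subgraph induced on any subset of vertices (scaled appropriately), then it has a vertex of degree at most ⌊(13 + √(73 + 96g))/2⌋ - 1; consequently its chromatic number is at most ⌊(13 + √(73 + 96g))/2⌋. -/
import Mathlib

open Finset

lemma my_induce_degree {V : Type*} [Fintype V] [DecidableEq V]
    (G : SimpleGraph V) [DecidableRel G.Adj] (s : Finset V)
    (b : (s : Set V)) :
    (G.induce (s : Set V)).degree b = (s.filter (G.Adj ↑b)).card := by
  rw [SimpleGraph.degree, SimpleGraph.neighborFinset_eq_filter]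
  apply Finset.card_nbij (fun x => ↑x)
  · intro x hx
    have hx' : (G.induce (s : Set V)).Adj b x := by
      simpa using (Finset.mem_coe.mp hx)
    exact Finset.mem_coe.mpr (Finset.mem_filter.mpr ⟨x.2, hx'⟩)
  · intro x _ y _ hxy; exact Subtype.ext hxy
  · intro x hx
    have hx' := Finset.mem_filter.mp (Finset.mem_coe.mp hx)
    refine ⟨⟨x, hx'.1⟩, ?_, rfl⟩
    have : (G.induce (s : Set V)).Adj b ⟨x, hx'.1⟩ := hx'.2
    simpa using this

lemma my_exists_coloring {V : Type*} [Fintype V] [DecidableEq V]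
    (G : SimpleGraph V) [DecidableRel G.Adj] (k : ℕ) (hk : 0 < k)
    (h : ∀ s : Finset V, s.Nonempty → ∃ v ∈ s, (s.filter (G.Adj v)).card < k) :
    ∀ s : Finset V, ∃ C : V → Fin k, ∀ u ∈ s, ∀ w ∈ s, G.Adj u w → C u ≠ C w := by
  intro s
  induction s using Finset.strongInduction with
  | _ s ih =>
    rcases s.eq_empty_or_nonempty with rfl | hs
    · exact ⟨fun _ => ⟨0, hk⟩, by simp⟩
    obtain ⟨v, hv, hdeg⟩ := h s hs
    obtain ⟨C, hC⟩ := ih (s.erase v) (Finset.erase_ssubset hv)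
    have hfilter : (((s.erase v).filter (G.Adj v)).image C).card < k := by
      refine lt_of_le_of_lt Finset.card_image_le (lt_of_le_of_lt (Finset.card_le_card ?_) hdeg)
      intro x hx
      simp only [Finset.mem_filter, Finset.mem_erase] at hx ⊢
      exact ⟨hx.1.2, hx.2⟩
    obtain ⟨c, hc⟩ : ∃ c : Fin k, c ∉ ((s.erase v).filter (G.Adj v)).image C := by
      by_contra hcon
      push_neg at hcon
      have h2 := Finset.card_le_card (fun c _ => hcon c : (univ : Finset (Fin k)) ⊆ _)
      simp only [Finset.card_univ, Fintype.card_fin] at h2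
      omega
    refine ⟨Function.update C v c, ?_⟩
    intro u hu w hw huw
    rcases eq_or_ne u v with rfl | hune
    · rcases eq_or_ne w u with rfl | hwne
      · exact absurd huw (G.irrefl)
      · rw [Function.update_self, Function.update_of_ne hwne]
        intro hcw
        exact hc (Finset.mem_image.mpr ⟨w, Finset.mem_filter.mpr
          ⟨Finset.mem_erase.mpr ⟨hwne, hw⟩, huw⟩, hcw.symm⟩)
    · rw [Function.update_of_ne hune]
      rcases eq_or_ne w v with rfl | hwne
      · rw [Function.update_self]
        intro hcu
        exact hc (Finset.mem_image.mpr ⟨u, Finset.mem_filter.mpr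
          ⟨Finset.mem_erase.mpr ⟨hune, hu⟩, huw.symm⟩, hcu⟩)
      · rw [Function.update_of_ne hwne]
        exact hC u (Finset.mem_erase.mpr ⟨hune, hu⟩) w (Finset.mem_erase.mpr ⟨hwne, hw⟩) huw

/-- A graph biembeddable in S_g (g ≥ 1), i.e. in which every induced subgraph on
m ≥ 3 vertices has at most 2(3m - 6 + 6g) edges, has a vertex of degree at most
⌊(13 + √(73 + 96g))/2⌋ - 1, and its chromatic number is at most
⌊(13 + √(73 + 96g))/2⌋. -/
theorem bichromatic_bound (g : ℕ) (hg : 1 ≤ g) (n : ℕ) (hn : 0 < n)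
    (G : SimpleGraph (Fin n)) [DecidableRel G.Adj]
    (hedges : ∀ s : Finset (Fin n), 3 ≤ s.card →
      (G.induce (s : Set (Fin n))).edgeFinset.card ≤ 2 * (3 * s.card - 6 + 6 * g)) :
    (∃ v : Fin n, G.degree v ≤ ⌊(13 + Real.sqrt (73 + 96 * g)) / 2⌋₊ - 1) ∧
    G.chromaticNumber ≤ (⌊(13 + Real.sqrt (73 + 96 * g)) / 2⌋₊ : ℕ∞) := by
  set k : ℕ := ⌊(13 + Real.sqrt (73 + 96 * g)) / 2⌋₊ with hkdef
  -- facts about the square root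
  have hD0 : (0 : ℝ) ≤ 73 + 96 * g := by positivity
  have hrsq : Real.sqrt (73 + 96 * g) ^ 2 = 73 + 96 * g := Real.sq_sqrt hD0
  have hr13 : (13 : ℝ) ≤ Real.sqrt (73 + 96 * g) := by
    have h169 : (169 : ℝ) ≤ 73 + 96 * g := by
      have : (1 : ℝ) ≤ g := by exact_mod_cast hg
      linarith
    calc (13 : ℝ) = Real.sqrt 169 := by
          rw [show (169 : ℝ) = 13 ^ 2 by norm_num, Real.sqrt_sq (by norm_num)]
      _ ≤ _ := Real.sqrt_le_sqrt h169
  have hk13 : 13 ≤ k := by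
    apply Nat.le_floor
    push_cast
    linarith
  have hklt : (11 + Real.sqrt (73 + 96 * g)) / 2 < (k : ℝ) := by
    have := Nat.sub_one_lt_floor ((13 + Real.sqrt (73 + 96 * g)) / 2)
    rw [← hkdef] at this
    linarith
  have hq : 12 * (k + 1) + 24 * g < k * (k + 1) + 24 := by
    have hr : (12 : ℝ) * (k + 1) + 24 * g < k * (k + 1) + 24 := by
      nlinarith [hrsq, hr13, hklt]
    exact_mod_cast hr
  have hk0 : 0 < k := by omega
  -- main degree claim
  have hlow : ∀ s : Finset (Fin n), s.Nonempty → ∃ v ∈ s, (s.filter (G.Adj v)).card < k := by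
    intro s hs
    by_cases hcard : s.card ≤ k
    · obtain ⟨v, hv⟩ := hs
      refine ⟨v, hv, ?_⟩
      have hsub : s.filter (G.Adj v) ⊆ s.erase v := by
        intro x hx
        rw [Finset.mem_filter] at hx
        exact Finset.mem_erase.mpr ⟨fun hxv => G.irrefl (hxv ▸ hx.2), hx.1⟩
      have := Finset.card_le_card hsub
      have := Finset.card_erase_lt_of_mem hv
      omega
    · push_neg at hcard
      by_contra hcon
      push_neg at hcon
      have h3 : 3 ≤ s.card := by omega
      have hsum : ∑ b : (s : Set (Fin n)), (G.induce (s : Set (Fin n))).degree b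
          = 2 * (G.induce (s : Set (Fin n))).edgeFinset.card :=
        SimpleGraph.sum_degrees_eq_twice_card_edges _
      have hsum2 : ∑ b : (s : Set (Fin n)), (G.induce (s : Set (Fin n))).degree b
          = ∑ v ∈ s, (s.filter (G.Adj v)).card := by
        rw [← Finset.sum_finset_coe (fun v => (s.filter (G.Adj v)).card) s]
        exact Finset.sum_congr rfl fun b _ => my_induce_degree G s b
      have hlb : k * s.card ≤ ∑ v ∈ s, (s.filter (G.Adj v)).card := by
        calc k * s.card = ∑ _v ∈ s, k := by rw [Finset.sum_const, smul_eq_mul, mul_comm]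
          _ ≤ _ := Finset.sum_le_sum fun v hv => hcon v hv
      have hub : ∑ v ∈ s, (s.filter (G.Adj v)).card ≤ 4 * (3 * s.card - 6 + 6 * g) := by
        rw [← hsum2, hsum]
        have := hedges s h3
        omega
      -- arithmetic contradiction
      set m := s.card with hm
      have hmk : k + 1 ≤ m := hcard
      have key : k * m + 24 ≤ 12 * m + 24 * g := by
        have h6 : 6 ≤ 3 * m := by omega
        have : k * m ≤ 12 * m + 24 * g - 24 := by omega
        omega
      have hz : (k : ℤ) * m + 24 ≤ 12 * m + 24 * g := by exact_mod_cast key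
      have hqz : (12 : ℤ) * (k + 1) + 24 * g < k * (k + 1) + 24 := by exact_mod_cast hq
      have hmkz : (k : ℤ) + 1 ≤ m := by exact_mod_cast hmk
      have hk13z : (13 : ℤ) ≤ k := by exact_mod_cast hk13
      nlinarith [mul_nonneg (by linarith : (0:ℤ) ≤ (k:ℤ) - 12)
        (by linarith : (0:ℤ) ≤ (m:ℤ) - ((k:ℤ) + 1))]
  constructor
  · obtain ⟨v, _, hv⟩ := hlow Finset.univ (Finset.univ_nonempty_iff.mpr ⟨⟨0, hn⟩⟩)
    refine ⟨v, ?_⟩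
    have hdeg : G.degree v = (Finset.univ.filter (G.Adj v)).card := by
      rw [SimpleGraph.degree, SimpleGraph.neighborFinset_eq_filter]
    omega
  · obtain ⟨C, hC⟩ := my_exists_coloring G k hk0 hlow Finset.univ
    have : G.Colorable k := ⟨SimpleGraph.Coloring.mk C fun {u w} h =>
      hC u (Finset.mem_univ u) w (Finset.mem_univ w) h⟩
    exact this.chromaticNumber_le
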